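/- The function y = z J_ν'(z) + c J_ν(z) satisfies z²(z² − ν² + c²) y'' − z(z² + ν² − c²) y' + [(z² − ν²)² + 2c z² + c²(z² − ν²)] y = 0. -/

import Mathlib

open Real

/-- The Bessel function of the first kind `J_ν(x)`, for `x > 0`, defined by its series. -/
noncomputable def besselJ (ν : ℝ) (x : ℝ) : ℝ :=
  ∑' n : ℕ, (-1 : ℝ) ^ n * (x / 2) ^ (2 * (n : ℝ) + ν) / (n.factorial * Real.Gamma (ν + n + 1))

/-!
Write `J_ν = ∑ tₙ` with `tₙ = aₙ (x/2)^(2n+ν)`. Since `∑ aₙ Rⁿ` converges for every `R`, the Weierstrass M-test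
on `(x/2, 2x)` justifies differentiating termwise, and the derivative is again a series of the
same shape with exponent shifted by `-1`. The Euler operator `x d/dx` multiplies the `n`-th term
by `2n + ν`, so `x²J'' + xJ' - ν²J = ∑ 4n(n+ν) tₙ`, while the recursion
`aₙ₊₁ (n+1)(ν+n+1) = -aₙ` turns `x²J` into `-∑ 4(n+1)(n+1+ν) tₙ₊₁`: Bessel's equation telescopes.
For any solution `J` of Bessel's equation, `y = xJ' + cJ` has `y' = cJ' - (x² - ν²)J/x`;
differentiating once more and eliminating `J''` with Bessel's equation gives the claim.
-/

open Filter Set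

noncomputable def besselTerm (a : ℕ → ℝ) (p x : ℝ) (n : ℕ) : ℝ :=
  a n * (x / 2) ^ (2 * (n : ℝ) + p)

noncomputable def besselSeries (a : ℕ → ℝ) (p x : ℝ) : ℝ :=
  ∑' n, besselTerm a p x n

noncomputable def derivCoeff (a : ℕ → ℝ) (p : ℝ) (n : ℕ) : ℝ :=
  a n * ((2 * n + p) / 2)

lemma half_rpow_two_mul_add_le {r s x : ℝ} (p : ℝ) (hr : 0 < r) (hx : x ∈ Ioo r s) (n : ℕ) :
    (x / 2) ^ (2 * (n : ℝ) + p) ≤ max ((r / 2) ^ p) ((s / 2) ^ p) * ((s / 2) ^ 2) ^ n := by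
  obtain ⟨hrx, hxs⟩ := hx
  have hx2 : 0 < x / 2 := by linarith
  rw [rpow_add hx2, mul_comm, ← pow_mul, show 2 * (n : ℝ) = ((2 * n : ℕ) : ℝ) by push_cast; ring,
    rpow_natCast]
  gcongr
  rcases le_or_gt 0 p with hp | hp
  · exact le_max_of_le_right (rpow_le_rpow hx2.le (by linarith) hp)
  · exact le_max_of_le_left (rpow_le_rpow_of_nonpos (by linarith) (by linarith) hp.le)

section

variable {a : ℕ → ℝ}

lemma hasDerivAt_besselTerm (p : ℝ) {x : ℝ} (hx : 0 < x) (n : ℕ) :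
    HasDerivAt (fun t => besselTerm a p t n) (besselTerm (derivCoeff a p) (p - 1) x n) x := by
  have h := (((hasDerivAt_id' x).div_const 2).rpow_const (p := 2 * (n : ℝ) + p)
    (Or.inl (by positivity))).const_mul (a n)
  refine h.congr_deriv ?_
  rw [besselTerm, derivCoeff, show 2 * (n : ℝ) + p - 1 = 2 * n + (p - 1) by ring]
  ring

lemma mul_besselTerm_derivCoeff (p : ℝ) {x : ℝ} (hx : x ≠ 0) (n : ℕ) :
    x * besselTerm (derivCoeff a p) (p - 1) x n = (2 * n + p) * besselTerm a p x n := by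
  rw [besselTerm, besselTerm, show 2 * (n : ℝ) + p = 2 * n + (p - 1) + 1 by ring,
    rpow_add_one (div_ne_zero hx two_ne_zero), derivCoeff]
  ring

lemma norm_besselTerm_le {r s x : ℝ} (p : ℝ) (hr : 0 < r) (hx : x ∈ Ioo r s) (n : ℕ) :
    ‖besselTerm a p x n‖ ≤ max ((r / 2) ^ p) ((s / 2) ^ p) * |a n * ((s / 2) ^ 2) ^ n| := by
  have hx2 : 0 < x / 2 := by linarith [hx.1]
  rw [besselTerm, norm_mul, norm_eq_abs, norm_of_nonneg (rpow_nonneg hx2.le _), abs_mul,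
    abs_of_nonneg (by positivity : (0 : ℝ) ≤ ((s / 2) ^ 2) ^ n), mul_left_comm]
  exact mul_le_mul_of_nonneg_left (half_rpow_two_mul_add_le p hr hx n) (abs_nonneg _)

lemma summable_besselTerm (ha : ∀ R : ℝ, Summable fun n => a n * R ^ n) (p : ℝ) {x : ℝ}
    (hx : 0 < x) : Summable (besselTerm a p x) :=
  .of_norm_bounded ((ha _).abs.mul_left _)
    (norm_besselTerm_le (s := 2 * x) p (half_pos hx) ⟨by linarith, by linarith⟩)

lemma summable_derivCoeff_mul_pow (ha : ∀ R : ℝ, Summable fun n => a n * R ^ n) (p R : ℝ) :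
    Summable fun n => derivCoeff a p n * R ^ n := by
  refine .of_norm_bounded ((ha (2 * R)).abs.mul_left (1 + |p|)) fun n => ?_
  have hfac : |(2 * n + p) / 2| ≤ (1 + |p|) * 2 ^ n := by
    have hn : (n : ℝ) ≤ 2 ^ n := by exact_mod_cast Nat.lt_two_pow_self.le
    have hp := abs_add_le (2 * (n : ℝ)) p
    rw [abs_of_nonneg (by positivity : (0 : ℝ) ≤ 2 * n)] at hp
    rw [abs_div, abs_two, div_le_iff₀ two_pos]
    nlinarith [abs_nonneg p, one_le_pow₀ (one_le_two : (1 : ℝ) ≤ 2) (n := n)]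
  rw [derivCoeff, norm_mul, norm_mul, norm_eq_abs, norm_eq_abs, norm_eq_abs, abs_mul, abs_pow,
    abs_pow, abs_mul, abs_two, mul_pow]
  calc |a n| * |(2 * n + p) / 2| * |R| ^ n ≤ |a n| * ((1 + |p|) * 2 ^ n) * |R| ^ n := by gcongr
    _ = (1 + |p|) * (|a n| * (2 ^ n * |R| ^ n)) := by ring

theorem hasDerivAt_besselSeries (ha : ∀ R : ℝ, Summable fun n => a n * R ^ n) (p : ℝ) {x : ℝ}
    (hx : 0 < x) :
    HasDerivAt (besselSeries a p) (besselSeries (derivCoeff a p) (p - 1) x) x := by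
  have hr : 0 < x / 2 := half_pos hx
  have hmem : x ∈ Ioo (x / 2) (2 * x) := ⟨by linarith, by linarith⟩
  exact hasDerivAt_tsum_of_isPreconnected ((summable_derivCoeff_mul_pow ha p _).abs.mul_left _)
    isOpen_Ioo isPreconnected_Ioo (fun n y hy => hasDerivAt_besselTerm p (hr.trans hy.1) n)
    (fun n y hy => norm_besselTerm_le (p - 1) hr hy n) hmem (summable_besselTerm ha p hx) hmem

end

section

variable {a : ℕ → ℝ} {ν : ℝ}

lemma sq_mul_besselTerm (hrec : ∀ n : ℕ, a (n + 1) * ((n + 1) * (ν + n + 1)) = -a n) {x : ℝ}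
    (hx : 0 < x) (n : ℕ) :
    x ^ 2 * besselTerm a ν x n =
      -(4 * ((n + 1 : ℕ) : ℝ) * (((n + 1 : ℕ) : ℝ) + ν) * besselTerm a ν x (n + 1)) := by
  have hpow : (x / 2) ^ (2 * ((n + 1 : ℕ) : ℝ) + ν) = (x / 2) ^ (2 * (n : ℝ) + ν) * (x / 2) ^ 2 := by
    rw [← rpow_natCast, ← rpow_add (by positivity)]
    push_cast
    ring_nf
  rw [besselTerm, besselTerm, hpow]
  push_cast
  linear_combination (4 * (x / 2) ^ (2 * (n : ℝ) + ν) * (x / 2) ^ 2) * hrec n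

theorem besselSeries_ode (ha : ∀ R : ℝ, Summable fun n => a n * R ^ n)
    (hrec : ∀ n : ℕ, a (n + 1) * ((n + 1) * (ν + n + 1)) = -a n) {x : ℝ} (hx : 0 < x) :
    x ^ 2 * besselSeries (derivCoeff (derivCoeff a ν) (ν - 1)) (ν - 1 - 1) x
      + x * besselSeries (derivCoeff a ν) (ν - 1) x + (x ^ 2 - ν ^ 2) * besselSeries a ν x = 0 := by
  have ha' := summable_derivCoeff_mul_pow ha ν
  have hJ : HasSum (besselTerm a ν x) (besselSeries a ν x) := (summable_besselTerm ha ν hx).hasSum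
  have hJ1 : HasSum (fun n => (2 * n + ν) * besselTerm a ν x n)
      (x * besselSeries (derivCoeff a ν) (ν - 1) x) :=
    ((summable_besselTerm ha' (ν - 1) hx).hasSum.mul_left x).congr_fun fun n =>
      (mul_besselTerm_derivCoeff ν hx.ne' n).symm
  have hJ2 : HasSum (fun n => (2 * n + ν) * (2 * n + ν - 1) * besselTerm a ν x n)
      (x ^ 2 * besselSeries (derivCoeff (derivCoeff a ν) (ν - 1)) (ν - 1 - 1) x) := by
    have h := ((summable_besselTerm (summable_derivCoeff_mul_pow ha' (ν - 1)) (ν - 1 - 1)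
      hx).hasSum.mul_left x).mul_left x
    rw [← mul_assoc, ← sq] at h
    refine h.congr_fun fun n => ?_
    rw [mul_besselTerm_derivCoeff (ν - 1) hx.ne', mul_left_comm x,
      mul_besselTerm_derivCoeff ν hx.ne']
    ring
  have hw : HasSum (fun n : ℕ => 4 * n * (n + ν) * besselTerm a ν x n)
      (x ^ 2 * besselSeries (derivCoeff (derivCoeff a ν) (ν - 1)) (ν - 1 - 1) x
        + x * besselSeries (derivCoeff a ν) (ν - 1) x - ν ^ 2 * besselSeries a ν x) :=
    ((hJ2.add hJ1).sub (hJ.mul_left (ν ^ 2))).congr_fun fun n => by ring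
  have hw_succ : HasSum (fun n : ℕ => 4 * ((n + 1 : ℕ) : ℝ) * (((n + 1 : ℕ) : ℝ) + ν) *
      besselTerm a ν x (n + 1)) (-(x ^ 2 * besselSeries a ν x)) :=
    (hJ.mul_left (x ^ 2)).neg.congr_fun fun n => by rw [sq_mul_besselTerm hrec hx, neg_neg]
  have h := ((hasSum_nat_add_iff' 1).mpr hw).unique hw_succ
  simp only [Finset.range_one, Finset.sum_singleton, CharP.cast_eq_zero, mul_zero, zero_mul,
    sub_zero] at h
  linear_combination h

end

noncomputable def besselCoef (ν : ℝ) (n : ℕ) : ℝ :=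
  (-1 : ℝ) ^ n / (n.factorial * Gamma (ν + n + 1))

lemma besselJ_eq_besselSeries (ν : ℝ) : besselJ ν = besselSeries (besselCoef ν) ν :=
  funext fun _ => tsum_congr fun _ => mul_div_right_comm _ _ _

lemma besselCoef_succ_mul (ν : ℝ) (n : ℕ) :
    besselCoef ν (n + 1) * ((n + 1) * (ν + n + 1)) = -besselCoef ν n := by
  rcases eq_or_ne (ν + n + 1) 0 with h0 | h0
  · simp [besselCoef, h0, Gamma_zero]
  have hΓ : Gamma (ν + ↑(n + 1) + 1) = (ν + n + 1) * Gamma (ν + n + 1) := by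
    rw [← Gamma_add_one h0]
    push_cast
    ring_nf
  rcases eq_or_ne (Gamma (ν + n + 1)) 0 with hΓ0 | hΓ0
  · simp only [besselCoef, hΓ, hΓ0, mul_zero, div_zero, zero_mul, neg_zero]
  rw [besselCoef, besselCoef, hΓ, Nat.factorial_succ]
  push_cast
  field_simp
  ring

lemma summable_besselCoef_mul_pow (ν R : ℝ) : Summable fun n => besselCoef ν n * R ^ n := by
  obtain ⟨N, hN⟩ := exists_nat_ge (1 - ν)
  refine .of_norm_bounded_eventually_nat (Real.summable_pow_div_factorial |R|) ?_
  filter_upwards [eventually_ge_atTop N] with n hn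
  have hn' : (N : ℝ) ≤ n := by exact_mod_cast hn
  have hΓ : 1 ≤ Gamma (ν + n + 1) :=
    calc 1 = Gamma 2 := Gamma_two.symm
      _ ≤ Gamma (ν + n + 1) := Gamma_strictMonoOn_Ici.monotoneOn (by simp)
          (show (2 : ℝ) ≤ ν + n + 1 by linarith) (by linarith)
  have hnorm : ‖besselCoef ν n * R ^ n‖ = |R| ^ n / (n.factorial * Gamma (ν + n + 1)) := by
    rw [besselCoef, norm_eq_abs, abs_mul, abs_div, abs_pow, abs_pow, abs_neg, abs_one, one_pow,
      abs_of_pos (by positivity)]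
    ring
  rw [hnorm]
  exact div_le_div_of_nonneg_left (by positivity) (by positivity)
    (le_mul_of_one_le_right (by positivity) hΓ)

section

variable (ν : ℝ) {x : ℝ}

lemma hasDerivAt_besselJ (hx : 0 < x) :
    HasDerivAt (besselJ ν) (besselSeries (derivCoeff (besselCoef ν) ν) (ν - 1) x) x := by
  rw [besselJ_eq_besselSeries]
  exact hasDerivAt_besselSeries (summable_besselCoef_mul_pow ν) ν hx

lemma hasDerivAt_deriv_besselJ (hx : 0 < x) :
    HasDerivAt (deriv (besselJ ν))
      (besselSeries (derivCoeff (derivCoeff (besselCoef ν) ν) (ν - 1)) (ν - 1 - 1) x) x :=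
  (hasDerivAt_besselSeries (summable_derivCoeff_mul_pow (summable_besselCoef_mul_pow ν) ν) (ν - 1)
    hx).congr_of_eventuallyEq <|
      eventually_of_mem (Ioi_mem_nhds hx) fun _ hy => (hasDerivAt_besselJ ν hy).deriv

theorem besselJ_ode (hx : 0 < x) :
    x ^ 2 * deriv (deriv (besselJ ν)) x + x * deriv (besselJ ν) x
      + (x ^ 2 - ν ^ 2) * besselJ ν x = 0 := by
  rw [(hasDerivAt_deriv_besselJ ν hx).deriv, (hasDerivAt_besselJ ν hx).deriv,
    besselJ_eq_besselSeries]
  exact besselSeries_ode (summable_besselCoef_mul_pow ν) (besselCoef_succ_mul ν) hx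

end

theorem combination_ode_of_bessel_ode {f : ℝ → ℝ} {ν : ℝ} (c : ℝ)
    (hf : ∀ x, 0 < x → DifferentiableAt ℝ f x)
    (hf' : ∀ x, 0 < x → DifferentiableAt ℝ (deriv f) x)
    (hode : ∀ x, 0 < x → x ^ 2 * deriv (deriv f) x + x * deriv f x + (x ^ 2 - ν ^ 2) * f x = 0)
    {z : ℝ} (hz : 0 < z) :
    z ^ 2 * (z ^ 2 - ν ^ 2 + c ^ 2) * iteratedDeriv 2 (fun t => t * deriv f t + c * f t) z
      - z * (z ^ 2 + ν ^ 2 - c ^ 2) * deriv (fun t => t * deriv f t + c * f t) z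
      + ((z ^ 2 - ν ^ 2) ^ 2 + 2 * c * z ^ 2 + c ^ 2 * (z ^ 2 - ν ^ 2)) *
        (z * deriv f z + c * f z) = 0 := by
  have hy' : ∀ x, 0 < x → deriv (fun t => t * deriv f t + c * f t) x =
      c * deriv f x - (x ^ 2 - ν ^ 2) / x * f x := by
    intro x hx
    have hy : HasDerivAt (fun t => t * deriv f t + c * f t)
        (1 * deriv f x + x * deriv (deriv f) x + c * deriv f x) x :=
      ((hasDerivAt_id' x).mul (hf' x hx).hasDerivAt).add ((hf x hx).hasDerivAt.const_mul c)
    rw [hy.deriv]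
    field_simp
    linear_combination hode x hx
  have hq : HasDerivAt (fun x => (x ^ 2 - ν ^ 2) / x) ((z ^ 2 + ν ^ 2) / z ^ 2) z :=
    (((hasDerivAt_pow 2 z).sub_const (ν ^ 2)).div (hasDerivAt_id' z) hz.ne').congr_deriv <| by
      field_simp
      ring
  have hy'' : HasDerivAt (deriv fun t => t * deriv f t + c * f t)
      (c * deriv (deriv f) z - ((z ^ 2 + ν ^ 2) / z ^ 2 * f z + (z ^ 2 - ν ^ 2) / z * deriv f z))
      z :=
    (((hf' z hz).hasDerivAt.const_mul c).sub (hq.mul (hf z hz).hasDerivAt)).congr_of_eventuallyEq <|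
      eventually_of_mem (Ioi_mem_nhds hz) hy'
  rw [iteratedDeriv_succ, iteratedDeriv_one, hy''.deriv, hy' z hz]
  field_simp
  linear_combination (c * (z ^ 2 - ν ^ 2 + c ^ 2)) * hode z hz

/-- The function `y = z J_ν'(z) + c J_ν(z)` satisfies
`z²(z² − ν² + c²) y'' − z(z² + ν² − c²) y' + [(z² − ν²)² + 2cz² + c²(z² − ν²)] y = 0`. -/
theorem derivative_combination_ode (ν c : ℝ) :
    ∀ z : ℝ, 0 < z →
      z ^ 2 * (z ^ 2 - ν ^ 2 + c ^ 2) *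
          iteratedDeriv 2 (fun t => t * deriv (besselJ ν) t + c * besselJ ν t) z
        - z * (z ^ 2 + ν ^ 2 - c ^ 2) *
          deriv (fun t => t * deriv (besselJ ν) t + c * besselJ ν t) z
        + ((z ^ 2 - ν ^ 2) ^ 2 + 2 * c * z ^ 2 + c ^ 2 * (z ^ 2 - ν ^ 2)) *
          (z * deriv (besselJ ν) z + c * besselJ ν z) = 0 := fun _ hz =>
  combination_ode_of_bessel_ode c (fun _ hx => (hasDerivAt_besselJ ν hx).differentiableAt)
    (fun _ hx => (hasDerivAt_deriv_besselJ ν hx).differentiableAt) (fun _ hx => besselJ_ode ν hx) hz
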